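/- arXiv:2405.10088 — 5 statements merged into one kernel-verified Lean document; each statement's English description precedes it below -/
import Mathlib

section
/- The motion of a finite vertex-transitive graph is never an odd prime; that is, if Γ is a finite vertex-transitive graph and p is an odd prime, then μ(Γ) ≠ p. -/
open Equiv Pointwise

/-- A graph is vertex-transitive if its automorphism group is transitive on the
vertices. -/
def IsVertexTransitive {V : Type*} (Γ : SimpleGraph V) : Prop :=
  ∀ u v : V, ∃ e : Γ ≃g Γ, e u = v

/-- The motion of a graph: the least number of vertices moved by a non-identity
automorphism (i.e. the minimal degree of its automorphism group). -/
noncomputable def motion {V : Type*} [Fintype V] [DecidableEq V] (Γ : SimpleGraph V) : ℕ :=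
  sInf {n | ∃ e : Γ ≃g Γ, (e.toEquiv : Equiv.Perm V) ≠ 1 ∧
    (Equiv.Perm.support (e.toEquiv : Equiv.Perm V)).card = n}

/-!
Raising a non-identity automorphism of minimal support to a suitable power gives one of prime
order; if the motion is a prime `p` this power still moves exactly `p` vertices, so it is a
`p`-cycle `y`. Vertices off the cycle are fixed by `⟨y⟩`, and `⟨y⟩` acts regularly on the cycle,
so the reflection `g a ↦ g⁻¹ a` of the cycle (identity elsewhere) is again an automorphism. For
`p ≥ 3` it is non-trivial and fixes `a`, so it moves fewer than `p` vertices.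
-/

open Finset

theorem exists_pow_prime_orderOf {G : Type*} [Monoid G] {x : G} (hx : IsOfFinOrder x)
    (h1 : x ≠ 1) : ∃ n, (orderOf (x ^ n)).Prime := by
  have hord : orderOf x ≠ 1 := by rwa [Ne, orderOf_eq_one_iff]
  refine ⟨orderOf x / (orderOf x).minFac, ?_⟩
  rw [orderOf_pow_orderOf_div hx.orderOf_pos.ne' (Nat.minFac_dvd _)]
  exact Nat.minFac_prime hord

namespace SimpleGraph

variable {V : Type*} (G : SimpleGraph V)

def autPerm : Subgroup (Perm V) where
  carrier := {σ | ∀ u v, G.Adj (σ u) (σ v) ↔ G.Adj u v}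
  one_mem' _ _ := Iff.rfl
  mul_mem' ha hb u v := (ha _ _).trans (hb u v)
  inv_mem' {σ} hσ u v := by simpa using (hσ (σ⁻¹ u) (σ⁻¹ v)).symm

variable {G}

theorem adj_apply_iff_of_mem_autPerm {σ : Perm V} (hσ : σ ∈ G.autPerm) (u v : V) :
    G.Adj (σ u) (σ v) ↔ G.Adj u v :=
  hσ u v

theorem toEquiv_mem_autPerm (e : G ≃g G) : e.toEquiv ∈ G.autPerm :=
  fun _ _ => e.map_adj_iff

end SimpleGraph

namespace Equiv.Perm

variable {α : Type*} [DecidableEq α] [Fintype α]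

theorem isCycle_of_prime_orderOf_of_prime_card_support {y : Perm α} (hord : (orderOf y).Prime)
    (hsupp : (#y.support).Prime) : y.IsCycle := by
  obtain ⟨n, hn⟩ := cycleType_prime_order hord
  have hsum : (n + 1) * orderOf y = #y.support := by
    rw [← sum_cycleType, hn, Multiset.sum_replicate, smul_eq_mul]
  have hn0 : n + 1 = 1 := by
    rw [← hsum] at hsupp
    exact (Nat.prime_mul_iff.mp hsupp).resolve_left (fun h => hord.ne_one h.2) |>.2
  refine isCycle_of_prime_order hord ?_
  rw [← hsum, hn0, one_mul]
  exact lt_two_mul_self hord.pos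

namespace IsCycle

variable {y : Perm α} (hy : y.IsCycle)

/-- The reflection `g a ↦ g⁻¹ a` of the cycle `y` about the base point `a` of
`hy.zpowersEquivSupport`, extended by the identity off the support of `y`. -/
noncomputable def reflection : Perm α :=
  ofSubtype (hy.zpowersEquivSupport.permCongr (Equiv.inv _))

theorem reflection_apply_zpowersEquivSupport (g : Subgroup.zpowers y) :
    hy.reflection (hy.zpowersEquivSupport g) = hy.zpowersEquivSupport g⁻¹ := by
  simp [reflection, ofSubtype_apply_coe, permCongr_apply]

theorem reflection_apply_of_notMem {a : α} (ha : a ∉ y.support) : hy.reflection a = a :=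
  ofSubtype_apply_of_not_mem _ ha

theorem card_support_reflection_lt : #hy.reflection.support < #y.support := by
  set a₀ : α := (hy.zpowersEquivSupport 1 : α)
  have ha₀ : a₀ ∈ y.support := (hy.zpowersEquivSupport 1).2
  have hsub : hy.reflection.support ⊆ y.support.erase a₀ := by
    intro b hb
    rw [mem_support] at hb
    refine mem_erase.mpr ⟨?_, ?_⟩
    · rintro rfl
      exact hb (by rw [hy.reflection_apply_zpowersEquivSupport, inv_one])
    · by_contra hb'
      exact hb (hy.reflection_apply_of_notMem hb')
  calc #hy.reflection.support ≤ #(y.support.erase a₀) := card_le_card hsub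
    _ < #y.support := card_erase_lt_of_mem ha₀

theorem reflection_ne_one (h3 : 3 ≤ #y.support) : hy.reflection ≠ 1 := by
  intro h
  let g : Subgroup.zpowers y := ⟨y, Subgroup.mem_zpowers y⟩
  have hfix := hy.reflection_apply_zpowersEquivSupport g
  rw [h, one_apply, ← Subtype.ext_iff, hy.zpowersEquivSupport.apply_eq_iff_eq] at hfix
  have hsq : y ^ 2 = 1 := by
    rw [pow_two, ← inv_eq_iff_mul_eq_one]
    exact (congrArg Subtype.val hfix).symm
  have := Nat.le_of_dvd two_pos (orderOf_dvd_of_pow_eq_one hsq)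
  rw [hy.orderOf] at this
  omega

theorem reflection_mem_autPerm {G : SimpleGraph α} (hyG : y ∈ G.autPerm) :
    hy.reflection ∈ G.autPerm := by
  set e := hy.zpowersEquivSupport
  have hzG : ∀ g : Subgroup.zpowers y, (g : Perm α) ∈ G.autPerm := fun g =>
    Subgroup.zpowers_le.mpr hyG g.2
  have hsurj : ∀ {w}, w ∈ y.support → ∃ g, (e g : α) = w :=
    fun hw => ⟨e.symm ⟨_, hw⟩, by simp⟩
  have hmul : ∀ g h : Subgroup.zpowers y, (g : Perm α) (e h) = e (g * h) := fun _ _ => rfl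
  have hfix : ∀ (g : Subgroup.zpowers y) {w}, w ∉ y.support → (g : Perm α) w = w := by
    rintro ⟨_, k, rfl⟩ w hw
    exact zpow_apply_eq_self_of_apply_eq_self (notMem_support.mp hw) k
  -- `g * h` carries `(g⁻¹ a, h⁻¹ a)` to `(h a, g a)`, and `g * g` carries `g⁻¹ a` to `g a`
  -- while fixing everything off the support
  have key : ∀ (g : Subgroup.zpowers y) (v : α),
      (G.Adj (hy.reflection (e g)) (hy.reflection v) ↔ G.Adj (e g) v) := by
    intro g v
    rw [hy.reflection_apply_zpowersEquivSupport]
    by_cases hvs : v ∈ y.support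
    · obtain ⟨h, rfl⟩ := hsurj hvs
      rw [hy.reflection_apply_zpowersEquivSupport,
        ← SimpleGraph.adj_apply_iff_of_mem_autPerm (hzG (g * h)), hmul, hmul,
        mul_inv_cancel_right, mul_comm' g h, mul_inv_cancel_right, G.adj_comm]
    · rw [hy.reflection_apply_of_notMem hvs,
        ← SimpleGraph.adj_apply_iff_of_mem_autPerm (hzG (g * g)), hmul, hfix _ hvs,
        mul_inv_cancel_right]
  intro u v
  by_cases hus : u ∈ y.support
  · obtain ⟨g, rfl⟩ := hsurj hus
    exact key g v
  by_cases hvs : v ∈ y.support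
  · obtain ⟨h, rfl⟩ := hsurj hvs
    rw [G.adj_comm, key h u, G.adj_comm]
  · rw [hy.reflection_apply_of_notMem hus, hy.reflection_apply_of_notMem hvs]

end IsCycle

end Equiv.Perm

section Motion

variable {V : Type*} [Fintype V] [DecidableEq V] {Γ : SimpleGraph V}

theorem motion_le_card_support {σ : Perm V} (hσ : σ ∈ Γ.autPerm) (hne : σ ≠ 1) :
    motion Γ ≤ #σ.support :=
  Nat.sInf_le ⟨⟨σ, hσ _ _⟩, hne, rfl⟩

theorem exists_card_support_eq_motion (h : motion Γ ≠ 0) :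
    ∃ σ ∈ Γ.autPerm, σ ≠ 1 ∧ #σ.support = motion Γ := by
  obtain ⟨e, hne, hcard⟩ := Nat.sInf_mem (Nat.nonempty_of_pos_sInf (Nat.pos_of_ne_zero h))
  exact ⟨e.toEquiv, Γ.toEquiv_mem_autPerm e, hne, hcard⟩

theorem exists_isCycle_card_support_eq_motion (hp : (motion Γ).Prime) :
    ∃ y ∈ Γ.autPerm, y.IsCycle ∧ #y.support = motion Γ := by
  obtain ⟨σ, hσ, hne, hcard⟩ := exists_card_support_eq_motion hp.ne_zero
  obtain ⟨n, hn⟩ := exists_pow_prime_orderOf (isOfFinOrder_of_finite σ) hne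
  have hyG : σ ^ n ∈ Γ.autPerm := pow_mem hσ n
  have hy1 : σ ^ n ≠ 1 := fun h => hn.ne_one (by rw [h, orderOf_one])
  have hsupp : #(σ ^ n).support = motion Γ :=
    le_antisymm (hcard ▸ card_le_card (Perm.support_pow_le σ n)) (motion_le_card_support hyG hy1)
  exact ⟨σ ^ n, hyG,
    Perm.isCycle_of_prime_orderOf_of_prime_card_support hn (hsupp ▸ hp), hsupp⟩

theorem motion_lt_card_support_of_isCycle {y : Perm V} (hyG : y ∈ Γ.autPerm) (hy : y.IsCycle)
    (h3 : 3 ≤ #y.support) : motion Γ < #y.support :=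
  (motion_le_card_support (hy.reflection_mem_autPerm hyG) (hy.reflection_ne_one h3)).trans_lt
    hy.card_support_reflection_lt

end Motion

theorem statement_3_general {V : Type} [Fintype V] [DecidableEq V] (Γ : SimpleGraph V)
    (p : ℕ) (hp : p.Prime) (hodd : Odd p) :
    motion Γ ≠ p := by
  rintro rfl
  obtain ⟨y, hyG, hy, hsupp⟩ := exists_isCycle_card_support_eq_motion hp
  have h3 : 3 ≤ motion Γ := by
    obtain ⟨k, hk⟩ := hodd
    have := hp.two_le
    omega
  exact (motion_lt_card_support_of_isCycle hyG hy (hsupp ▸ h3)).ne' hsupp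

/-- The motion of a finite vertex-transitive graph is never an odd
prime. -/
theorem statement_3 {V : Type} [Fintype V] [DecidableEq V] (Γ : SimpleGraph V)
    (hvt : IsVertexTransitive Γ) (p : ℕ) (hp : p.Prime) (hodd : Odd p) :
    motion Γ ≠ p :=
  statement_3_general Γ p hp hodd
end

section
/- Let G be a transitive permutation group of degree n with minimal degree 3. Then there exist m ≥ 3 and k with n = mk such that, up to permutation isomorphism, Alt(m)^k ≤ G ≤ Sym(m) ≀ Sym(k) acting on [m] × [k], where Alt(m)^k is contained in the base group Sym(m)^k of the wreath product. -/
open Equiv Pointwise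

/-- The minimal degree of a permutation group: the least number of points moved
by a non-identity element. -/
noncomputable def minDeg {Ω : Type*} [Fintype Ω] [DecidableEq Ω]
    (G : Subgroup (Equiv.Perm Ω)) : ℕ :=
  sInf {n | ∃ g ∈ G, g ≠ 1 ∧ (Equiv.Perm.support g).card = n}

/-- A permutation group is transitive. -/
def IsTransitivePermGroup {Ω : Type*} (G : Subgroup (Equiv.Perm Ω)) : Prop :=
  ∀ a b : Ω, ∃ g ∈ G, g a = b

/-- The element of the imprimitive wreath product determined by a function
`g : ι → Perm Δ` and a permutation `h` of the index set, acting on `Δ × ι` by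
`(δ, i) ↦ (g i δ, h i)`. -/
def wreathPerm {Δ ι : Type*} (g : ι → Equiv.Perm Δ) (h : Equiv.Perm ι) :
    Equiv.Perm (Δ × ι) where
  toFun x := (g x.2 x.1, h x.2)
  invFun x := ((g (h⁻¹ x.2))⁻¹ x.1, h⁻¹ x.2)
  left_inv := by rintro ⟨d, i⟩; simp
  right_inv := by rintro ⟨d, i⟩; simp

/-- The imprimitive wreath product `Y ≀ H` of permutation groups, as a permutation
group on `Δ × ι`.  (The defining set is already a subgroup, so taking the
subgroup closure does not change it.) -/
def wreathProduct {Δ ι : Type*} (Y : Subgroup (Equiv.Perm Δ))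
    (H : Subgroup (Equiv.Perm ι)) : Subgroup (Equiv.Perm (Δ × ι)) :=
  Subgroup.closure {σ | ∃ (g : ι → Equiv.Perm Δ) (h : Equiv.Perm ι),
    (∀ i, g i ∈ Y) ∧ h ∈ H ∧ σ = wreathPerm g h}

/-- The copy `X^ι` of a power of `X` inside the base group of a wreath product,
as a permutation group on `Δ × ι`. -/
def basePower {Δ ι : Type*} (X : Subgroup (Equiv.Perm Δ)) :
    Subgroup (Equiv.Perm (Δ × ι)) :=
  Subgroup.closure {σ | ∃ g : ι → Equiv.Perm Δ, (∀ i, g i ∈ X) ∧ σ = wreathPerm g 1}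

/-- Transport of permutations along a bijection, as a group isomorphism. -/
def permMapEquiv {α β : Type*} (f : α ≃ β) : Equiv.Perm α ≃* Equiv.Perm β where
  toFun g := (f.symm.trans g).trans f
  invFun g := (f.trans g).trans f.symm
  left_inv g := by ext x; simp
  right_inv g := by ext x; simp
  map_mul' g₁ g₂ := by ext x; simp [Equiv.Perm.mul_apply]

/-- Transport of a permutation group along a bijection of the underlying sets.
`mapPermGroup f G` is the permutation group on `β` corresponding to `G` under the
relabelling `f`; thus `G` and `mapPermGroup f G` are permutation isomorphic. -/
def mapPermGroup {α β : Type*} (f : α ≃ β) (G : Subgroup (Equiv.Perm α)) :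
    Subgroup (Equiv.Perm β) :=
  Subgroup.map (permMapEquiv f).toMonoidHom G

/-!
A group of minimal degree 3 contains a 3-cycle. Put `a ~ b` when `a = b` or `G` contains a
3-cycle `(a b t)`. Conjugating one 3-cycle of `G` by another that shares a point with it
produces every 3-cycle on the union of their supports, so `~` is a `G`-invariant equivalence
relation and `G` contains every 3-cycle inside a class, hence the alternating group of each class.
By transitivity all classes have the same size `m ≥ 3`; labelling the points of each of the `k`
classes by `[m]` identifies the classes with the fibres of `[m] × [k] → [k]`, which gives
`Alt(m)^k ≤ G`, while `G`, permuting the classes, lies in `Sym(m) ≀ Sym(k)`.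
-/

open Equiv Equiv.Perm

section ThreeCycle
variable {α : Type*} [DecidableEq α]

def threeCycle (a b c : α) : Perm α := swap a b * swap b c

variable {a b c : α}

theorem threeCycle_inv : (threeCycle a b c)⁻¹ = threeCycle c b a := by
  simp [threeCycle, swap_comm]

theorem threeCycle_rotate (hab : a ≠ b) (hac : a ≠ c) (hbc : b ≠ c) :
    threeCycle a b c = threeCycle b c a := by
  ext x
  simp only [threeCycle, Perm.mul_apply, swap_apply_def]
  grind

theorem threeCycle_inv_of_ne (hab : a ≠ b) (hac : a ≠ c) (hbc : b ≠ c) :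
    (threeCycle a b c)⁻¹ = threeCycle a c b := by
  rw [threeCycle_inv, threeCycle_rotate hbc.symm hac.symm hab.symm,
    threeCycle_rotate hab.symm hbc hac]

theorem conj_threeCycle (σ : Perm α) :
    σ * threeCycle a b c * σ⁻¹ = threeCycle (σ a) (σ b) (σ c) := by
  simp [threeCycle, swap_apply_apply, mul_assoc]

theorem permMapEquiv_threeCycle {β : Type*} [DecidableEq β] (f : α ≃ β) :
    permMapEquiv f (threeCycle a b c) = threeCycle (f a) (f b) (f c) := by
  simp [threeCycle, map_mul, permMapEquiv]

theorem threeCycle_apply_left (hab : a ≠ b) (hac : a ≠ c) : threeCycle a b c a = b := by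
  simp [threeCycle, swap_apply_of_ne_of_ne hab hac]

theorem threeCycle_apply_right : threeCycle a b c c = a := by
  simp [threeCycle]

theorem threeCycle_apply_of_ne {x : α} (hxa : x ≠ a) (hxb : x ≠ b) (hxc : x ≠ c) :
    threeCycle a b c x = x := by
  rw [threeCycle, Perm.mul_apply, swap_apply_of_ne_of_ne hxb hxc, swap_apply_of_ne_of_ne hxa hxb]

theorem Equiv.Perm.IsThreeCycle.exists_eq_threeCycle [Fintype α] {g : Perm α}
    (hg : g.IsThreeCycle) : ∃ a b c, a ≠ b ∧ a ≠ c ∧ b ≠ c ∧ g = threeCycle a b c := by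
  obtain ⟨a, ha⟩ : g.support.Nonempty :=
    Finset.card_pos.mp (by rw [hg.card_support]; norm_num)
  have hnd := hg.nodup_iff_mem_support.mpr ha
  simp only [List.nodup_cons, List.mem_cons, List.not_mem_nil] at hnd
  exact ⟨a, g a, g (g a), by grind, by grind, by grind,
    hg.eq_swap_mul_swap_iff_mem_support.mpr ha⟩

end ThreeCycle

theorem exists_isThreeCycle_mem_of_minDeg_eq_three {Ω : Type*} [Fintype Ω] [DecidableEq Ω]
    {G : Subgroup (Perm Ω)} (h : minDeg G = 3) : ∃ g ∈ G, g.IsThreeCycle := by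
  have hmem : minDeg G ∈ {n | ∃ g ∈ G, g ≠ 1 ∧ g.support.card = n} :=
    Nat.sInf_mem (Nat.nonempty_of_sInf_eq_succ h)
  obtain ⟨g, hg, -, hcard⟩ := h ▸ hmem
  exact ⟨g, hg, card_support_eq_three_iff.mp hcard⟩

section ThreeCycleRel
variable {Ω : Type*} [DecidableEq Ω] {G : Subgroup (Perm Ω)} {a b c s t : Ω}

theorem threeCycle_mem_conj {σ : Perm Ω} (hσ : σ ∈ G) (h : threeCycle a b c ∈ G) :
    threeCycle (σ a) (σ b) (σ c) ∈ G := by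
  rw [← conj_threeCycle]
  exact G.mul_mem (G.mul_mem hσ h) (G.inv_mem hσ)

theorem threeCycle_mem_of_mem_of_mem_same (hab : a ≠ b) (hac : a ≠ c) (hbc : b ≠ c)
    (hta : t ≠ a) (htc : t ≠ c)
    (h₁ : threeCycle a b t ∈ G) (h₂ : threeCycle a c t ∈ G) : threeCycle a b c ∈ G := by
  have h := threeCycle_mem_conj h₁ h₂
  rwa [threeCycle_apply_left hab hta.symm, threeCycle_apply_of_ne hac.symm hbc.symm htc.symm,
    threeCycle_apply_right, ← threeCycle_rotate hab hac hbc] at h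

theorem threeCycle_mem_of_mem_of_mem (hab : a ≠ b) (hac : a ≠ c) (hbc : b ≠ c)
    (hta : t ≠ a) (htb : t ≠ b) (hsa : s ≠ a) (hsc : s ≠ c)
    (h₁ : threeCycle a b t ∈ G) (h₂ : threeCycle a c s ∈ G) : threeCycle a b c ∈ G := by
  obtain rfl | htc := eq_or_ne t c
  · exact h₁
  obtain rfl | hsb := eq_or_ne s b
  · simpa [threeCycle_inv_of_ne hac hab hbc.symm] using G.inv_mem h₂
  obtain rfl | hst := eq_or_ne s t
  · exact threeCycle_mem_of_mem_of_mem_same hab hac hbc hsa htc h₁ h₂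
  have hbcs := threeCycle_mem_conj h₁ h₂
  rw [threeCycle_apply_left hab hta.symm, threeCycle_apply_of_ne hac.symm hbc.symm htc.symm,
    threeCycle_apply_of_ne hsa hsb hst] at hbcs
  have hact := threeCycle_mem_conj hbcs h₁
  rw [threeCycle_apply_of_ne hab hac hsa.symm, threeCycle_apply_left hbc hsb.symm,
    threeCycle_apply_of_ne htb htc hst.symm] at hact
  exact threeCycle_mem_of_mem_of_mem_same hab hac hbc hta htc h₁ hact

variable (G) in
def ThreeCycleRel (a b : Ω) : Prop :=
  a = b ∨ ∃ t, a ≠ b ∧ a ≠ t ∧ b ≠ t ∧ threeCycle a b t ∈ G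

theorem threeCycle_mem_of_threeCycleRel (hab : ThreeCycleRel G a b) (hac : ThreeCycleRel G a c)
    (hab' : a ≠ b) (hac' : a ≠ c) (hbc' : b ≠ c) : threeCycle a b c ∈ G := by
  obtain rfl | ⟨t, -, hat, hbt, h₁⟩ := hab
  · exact absurd rfl hab'
  obtain rfl | ⟨s, -, has, hcs, h₂⟩ := hac
  · exact absurd rfl hac'
  exact threeCycle_mem_of_mem_of_mem hab' hac' hbc' hat.symm hbt.symm has.symm hcs.symm h₁ h₂

theorem ThreeCycleRel.symm (h : ThreeCycleRel G a b) : ThreeCycleRel G b a := by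
  obtain rfl | ⟨t, hab, hat, hbt, h⟩ := h
  · exact .inl rfl
  have h' := G.inv_mem h
  rw [threeCycle_inv, threeCycle_rotate hbt.symm hat.symm hab.symm] at h'
  exact .inr ⟨t, hab.symm, hbt, hat, h'⟩

theorem ThreeCycleRel.trans (h₁ : ThreeCycleRel G a b) (h₂ : ThreeCycleRel G b c) :
    ThreeCycleRel G a c := by
  obtain rfl | hab := eq_or_ne a b
  · exact h₂
  obtain rfl | hbc := eq_or_ne b c
  · exact h₁
  obtain rfl | hac := eq_or_ne a c
  · exact .inl rfl
  have h := threeCycle_mem_of_threeCycleRel h₁.symm h₂ hab.symm hbc hac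
  exact .inr ⟨b, hac, hab, hbc.symm, by rwa [threeCycle_rotate hab.symm hbc hac] at h⟩

variable (G) in
def threeCycleSetoid : Setoid Ω where
  r := ThreeCycleRel G
  iseqv := ⟨fun _ => .inl rfl, .symm, .trans⟩

theorem threeCycleRel_apply_iff {σ : Perm Ω} (hσ : σ ∈ G) :
    ThreeCycleRel G (σ a) (σ b) ↔ ThreeCycleRel G a b := by
  suffices ∀ σ ∈ G, ∀ {a b}, ThreeCycleRel G a b → ThreeCycleRel G (σ a) (σ b) from
    ⟨fun h => by simpa using this σ⁻¹ (G.inv_mem hσ) h, this σ hσ⟩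
  rintro σ hσ a b (rfl | ⟨t, hab, hat, hbt, h⟩)
  · exact .inl rfl
  exact .inr ⟨σ t, σ.injective.ne hab, σ.injective.ne hat, σ.injective.ne hbt,
    threeCycle_mem_conj hσ h⟩

theorem three_le_natCard_threeCycleRel [Finite Ω] (hab : a ≠ b) (hac : a ≠ c) (hbc : b ≠ c)
    (h : threeCycle a b c ∈ G) : 3 ≤ Nat.card {x // ThreeCycleRel G a x} := by
  have hsub : {a, b, c} ⊆ {x | ThreeCycleRel G a x} := by
    rintro x (rfl | rfl | rfl)
    · exact .inl rfl
    · exact .inr ⟨c, hab, hac, hbc, h⟩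
    · exact .inr ⟨b, hac, hab, hbc.symm, threeCycle_inv_of_ne hab hac hbc ▸ G.inv_mem h⟩
  calc 3 = ({a, b, c} : Set Ω).ncard :=
        (Set.ncard_eq_three.mpr ⟨a, b, c, hab, hac, hbc, rfl⟩).symm
    _ ≤ {x | ThreeCycleRel G a x}.ncard := Set.ncard_le_ncard hsub
    _ = Nat.card {x // ThreeCycleRel G a x} := (Nat.card_coe_set_eq _).symm

end ThreeCycleRel

theorem Setoid.exists_equiv_fin_prod {α : Type*} [Finite α] (s : Setoid α) {m : ℕ}
    (hm : ∀ a, Nat.card {b // s a b} = m) :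
    ∃ (k : ℕ) (f : α ≃ Fin m × Fin k), ∀ a b, s a b ↔ (f a).2 = (f b).2 := by
  have hfiber (q : Quotient s) : Nat.card {b // Quotient.mk s b = q} = m := by
    induction q using Quotient.inductionOn with
    | h a => exact (Nat.card_congr (Equiv.subtypeEquivRight fun b =>
        Quotient.eq.trans ⟨s.symm, s.symm⟩)).trans (hm a)
  let e : Quotient s ≃ Fin (Nat.card (Quotient s)) := Finite.equivFin _
  let f : α ≃ Fin m × Fin (Nat.card (Quotient s)) :=
    (Equiv.sigmaFiberEquiv (Quotient.mk s)).symm.trans <|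
      (Equiv.sigmaCongrRight fun q => Finite.equivFinOfCardEq (hfiber q)).trans <|
      (Equiv.sigmaEquivProd _ _).trans <| (Equiv.prodCongr e (Equiv.refl _)).trans <|
      Equiv.prodComm _ _
  refine ⟨_, f, fun a b => ?_⟩
  change s a b ↔ e (Quotient.mk s a) = e (Quotient.mk s b)
  rw [e.apply_eq_iff_eq, Quotient.eq]

theorem IsTransitivePermGroup.natCard_rel_eq {Ω : Type*} {G : Subgroup (Perm Ω)}
    (hG : IsTransitivePermGroup G) {r : Ω → Ω → Prop}
    (hr : ∀ σ ∈ G, ∀ a b, r (σ a) (σ b) ↔ r a b) (a b : Ω) :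
    Nat.card {x // r a x} = Nat.card {x // r b x} := by
  obtain ⟨σ, hσ, rfl⟩ := hG a b
  exact Nat.card_congr (σ.subtypeEquiv fun x => (hr σ hσ a x).symm)

section Wreath
variable {Δ ι : Type*}

def wreathBaseHom : (ι → Perm Δ) →* Perm (Δ × ι) where
  toFun g := wreathPerm g 1
  map_one' := rfl
  map_mul' _ _ := rfl

theorem basePower_eq_map_pi (X : Subgroup (Perm Δ)) :
    (basePower X : Subgroup (Perm (Δ × ι))) =
      (Subgroup.pi Set.univ fun _ => X).map wreathBaseHom := by
  rw [← Subgroup.closure_eq ((Subgroup.pi Set.univ fun _ => X).map wreathBaseHom), basePower]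
  congr 1
  ext σ
  simp only [Set.mem_ofPred_eq, Subgroup.coe_map, Set.mem_image, SetLike.mem_coe,
    Subgroup.mem_pi, Set.mem_univ, true_implies]
  exact exists_congr fun g => and_congr_right fun _ => eq_comm

theorem wreathBaseHom_mulSingle_swap [DecidableEq Δ] [DecidableEq ι] (i : ι) (a b : Δ) :
    wreathBaseHom (Pi.mulSingle i (swap a b)) = swap (a, i) (b, i) := by
  ext ⟨d, j⟩ : 1
  obtain rfl | hj := eq_or_ne j i
  · simp only [wreathBaseHom, MonoidHom.coe_mk, OneHom.coe_mk, wreathPerm, coe_fn_mk,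
      Pi.mulSingle_eq_same, Perm.one_apply, swap_apply_def, Prod.mk.injEq, and_true]
    split_ifs <;> rfl
  · simp [wreathBaseHom, wreathPerm, swap_apply_def, hj]

theorem wreathBaseHom_mulSingle_threeCycle [DecidableEq Δ] [DecidableEq ι] (i : ι) (a b c : Δ) :
    wreathBaseHom (Pi.mulSingle i (threeCycle a b c)) = threeCycle (a, i) (b, i) (c, i) := by
  simp [threeCycle, Pi.mulSingle_mul, wreathBaseHom_mulSingle_swap]

theorem basePower_alternatingGroup_le [Fintype Δ] [DecidableEq Δ] [Finite ι] [DecidableEq ι]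
    {K : Subgroup (Perm (Δ × ι))}
    (hK : ∀ i a b c, a ≠ b → a ≠ c → b ≠ c → threeCycle (a, i) (b, i) (c, i) ∈ K) :
    basePower (alternatingGroup Δ) ≤ K := by
  rw [basePower_eq_map_pi, Subgroup.map_le_iff_le_comap, Subgroup.pi_le_iff]
  intro i
  rw [← closure_three_cycles_eq_alternating, MonoidHom.map_closure, Subgroup.closure_le]
  rintro _ ⟨g, hg, rfl⟩
  obtain ⟨a, b, c, hab, hac, hbc, rfl⟩ := hg.exists_eq_threeCycle
  simpa [wreathBaseHom_mulSingle_threeCycle] using hK i a b c hab hac hbc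

theorem mem_wreathProduct_top_of_snd_iff [Nonempty Δ] {σ : Perm (Δ × ι)}
    (hσ : ∀ p q, (σ p).2 = (σ q).2 ↔ p.2 = q.2) : σ ∈ wreathProduct ⊤ ⊤ := by
  obtain ⟨d₀⟩ := ‹Nonempty Δ›
  have hsnd : ∀ d i, (σ (d, i)).2 = (σ (d₀, i)).2 := fun d i => (hσ _ _).mpr rfl
  let h : Perm ι := Equiv.ofBijective (fun i => (σ (d₀, i)).2)
    ⟨fun i j hij => (hσ _ _).mp hij, fun j => ⟨(σ.symm (d₀, j)).2, by
      show (σ (d₀, _)).2 = j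
      rw [← hsnd (σ.symm (d₀, j)).1]; simp⟩⟩
  let g (i : ι) : Perm Δ := Equiv.ofBijective (fun d => (σ (d, i)).1)
    ⟨fun d e hde => by simpa using σ.injective (Prod.ext hde (by rw [hsnd d, hsnd e])),
     fun e => ⟨(σ.symm (e, h i)).1, by
      have hi : ((σ.symm (e, h i)).1, i) = σ.symm (e, h i) :=
        Prod.ext rfl ((hσ _ (d₀, i)).mp (by rw [apply_symm_apply]; rfl)).symm
      show (σ (_, i)).1 = e
      rw [hi, apply_symm_apply]⟩⟩
  refine Subgroup.subset_closure ⟨g, h, fun _ => trivial, trivial, ?_⟩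
  ext ⟨d, i⟩ : 1
  exact Prod.ext rfl (hsnd d i)

theorem mapPermGroup_le_wreathProduct_top {α Δ ι : Type*} [Nonempty Δ]
    {G : Subgroup (Perm α)} (f : α ≃ Δ × ι)
    (hG : ∀ σ ∈ G, ∀ a b, (f (σ a)).2 = (f (σ b)).2 ↔ (f a).2 = (f b).2) :
    mapPermGroup f G ≤ wreathProduct ⊤ ⊤ := by
  rintro _ ⟨σ, hσ, rfl⟩
  refine mem_wreathProduct_top_of_snd_iff fun p q => ?_
  simpa [permMapEquiv] using hG σ hσ (f.symm p) (f.symm q)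

theorem threeCycle_mem_mapPermGroup_iff {α β : Type*} [DecidableEq α] [DecidableEq β]
    (f : α ≃ β) {G : Subgroup (Perm α)} {a b c : β} :
    threeCycle a b c ∈ mapPermGroup f G ↔ threeCycle (f.symm a) (f.symm b) (f.symm c) ∈ G := by
  rw [mapPermGroup, Subgroup.mem_map_equiv, ← permMapEquiv_threeCycle]
  rfl

end Wreath

/-- A transitive permutation group `G` of degree `n` and minimal
degree 3 satisfies, up to permutation isomorphism,
`Alt(m)^k ≤ G ≤ Sym(m) ≀ Sym(k)` acting on `[m] × [k]` for some `m ≥ 3` with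
`n = m * k`, with `Alt(m)^k` inside the base group of the wreath product. -/
theorem statement_6 {Ω : Type} [Fintype Ω] [DecidableEq Ω] (G : Subgroup (Equiv.Perm Ω))
    (hG : IsTransitivePermGroup G) (n : ℕ) (hn : Fintype.card Ω = n)
    (h3 : minDeg G = 3) :
    ∃ (m k : ℕ) (f : Ω ≃ Fin m × Fin k), 3 ≤ m ∧ n = m * k ∧
      basePower (alternatingGroup (Fin m)) ≤ mapPermGroup f G ∧
      mapPermGroup f G ≤
        wreathProduct (⊤ : Subgroup (Equiv.Perm (Fin m))) (⊤ : Subgroup (Equiv.Perm (Fin k))) := by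
  obtain ⟨g, hgG, hg⟩ := exists_isThreeCycle_mem_of_minDeg_eq_three h3
  obtain ⟨a, b, c, hab, hac, hbc, rfl⟩ := hg.exists_eq_threeCycle
  have hinv : ∀ σ ∈ G, ∀ x y, ThreeCycleRel G (σ x) (σ y) ↔ ThreeCycleRel G x y :=
    fun σ hσ _ _ => threeCycleRel_apply_iff hσ
  obtain ⟨k, f, hf⟩ := (threeCycleSetoid G).exists_equiv_fin_prod
    (hG.natCard_rel_eq hinv · a)
  have hm := three_le_natCard_threeCycleRel hab hac hbc hgG
  have : NeZero (Nat.card {x // ThreeCycleRel G a x}) := ⟨by omega⟩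
  refine ⟨_, k, f, hm, ?_, ?_, ?_⟩
  · rw [← hn, Fintype.card_congr f, Fintype.card_prod, Fintype.card_fin, Fintype.card_fin]
  · refine basePower_alternatingGroup_le fun i x y z hxy hxz hyz => ?_
    have hrel (u v : Fin _) : ThreeCycleRel G (f.symm (u, i)) (f.symm (v, i)) :=
      (hf _ _).mpr (by simp)
    rw [threeCycle_mem_mapPermGroup_iff]
    exact threeCycle_mem_of_threeCycleRel (hrel x y) (hrel x z) (by simpa using hxy)
      (by simpa using hxz) (by simpa using hyz)
  · refine mapPermGroup_le_wreathProduct_top f fun σ hσ x y => ?_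
    rw [← hf, ← hf]
    exact hinv σ hσ x y
end

section
/- Let G be a transitive permutation group on Ω containing a 2²-element x = (α1 α2)(β1 β2). Let B be a system of minimal blocks for G and let B1 be the block containing α1. Then, up to swapping the roles of β1 and β2, one of the following holds: (1) supp(x) ⊆ B1; (2) B1 = {α1, β1}, in which case all blocks of B have size 2 and the block containing α2 is exactly {α2, β2}; or (3) supp(x) ∩ B1 = {α1, α2}, in which case there is a block B2 ≠ B1 of B containing {β1, β2}. -/
open Equiv Pointwise

/-- A partition of a set. -/
def IsPartition {Ω : Type*} (P : Set (Set Ω)) : Prop :=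
  ∀ ω : Ω, ∃! B, B ∈ P ∧ ω ∈ B

/-- A block system for a permutation group: a `G`-invariant partition into sets of
size at least 2. -/
def IsBlockSystem {Ω : Type*} (G : Subgroup (Equiv.Perm Ω)) (P : Set (Set Ω)) : Prop :=
  IsPartition P ∧ (∀ B ∈ P, 2 ≤ B.ncard) ∧
    ∀ g ∈ G, ∀ B ∈ P, (g : Equiv.Perm Ω) '' B ∈ P

/-- `P` is finer than `Q` (every block of `P` is contained in a block of `Q`). -/
def Finer {Ω : Type*} (P Q : Set (Set Ω)) : Prop := ∀ B ∈ P, ∃ C ∈ Q, B ⊆ C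

/-- A system of minimal blocks: a block system such that the only block system finer
than it is itself. -/
def IsMinimalBlockSystem {Ω : Type*} (G : Subgroup (Equiv.Perm Ω))
    (P : Set (Set Ω)) : Prop :=
  IsBlockSystem G P ∧ ∀ Q, IsBlockSystem G Q → Finer Q P → Q = P

/-- Lemma `rem:deg4_supp`.  Let `G` be transitive on `Ω` containing
the 2²-element `x = (α₁ α₂)(β₁ β₂)`, let `𝓑` be a system of minimal blocks and `B₁`
the block containing `α₁`.  Then, up to swapping the roles of `β₁` and `β₂`, either
`supp(x) ⊆ B₁`; or `B₁ = {α₁, β₁}`, all blocks have size 2, and `{α₂, β₂}` is a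
block; or `supp(x) ∩ B₁ = {α₁, α₂}` and some other block contains `{β₁, β₂}`. -/
theorem statement_9 {Ω : Type} [DecidableEq Ω] (G : Subgroup (Equiv.Perm Ω))
    (hG : IsTransitivePermGroup G) (α1 α2 β1 β2 : Ω)
    (hd : [α1, α2, β1, β2].Nodup)
    (x : Equiv.Perm Ω) (hx : x = Equiv.swap α1 α2 * Equiv.swap β1 β2) (hxG : x ∈ G)
    (P : Set (Set Ω)) (hP : IsMinimalBlockSystem G P)
    (B1 : Set Ω) (hB1 : B1 ∈ P) (hα1 : α1 ∈ B1) :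
    ({α1, α2, β1, β2} : Set Ω) ⊆ B1 ∨
    (∃ γ γ' : Ω, ((γ = β1 ∧ γ' = β2) ∨ (γ = β2 ∧ γ' = β1)) ∧
      B1 = {α1, γ} ∧ (∀ B ∈ P, B.ncard = 2) ∧ ({α2, γ'} : Set Ω) ∈ P) ∨
    (({α1, α2, β1, β2} : Set Ω) ∩ B1 = {α1, α2} ∧
      ∃ B2 ∈ P, B2 ≠ B1 ∧ ({β1, β2} : Set Ω) ⊆ B2) := by
  simp only [List.nodup_cons, List.mem_cons, List.mem_singleton, List.not_mem_nil,
    or_false, not_or, List.nodup_nil, and_true] at hd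
  obtain ⟨⟨h12, h13, h14⟩, ⟨h23, h24⟩, h34, -⟩ := hd
  obtain ⟨⟨hpart, hcard, hinv⟩, -⟩ := hP
  -- uniqueness of blocks
  have uniq : ∀ B ∈ P, ∀ C ∈ P, ∀ ω : Ω, ω ∈ B → ω ∈ C → B = C := by
    intro B hB C hC ω hωB hωC
    obtain ⟨D, -, hD⟩ := hpart ω
    rw [hD B ⟨hB, hωB⟩, hD C ⟨hC, hωC⟩]
  -- action of x on the four points
  have hxa1 : x α1 = α2 := by
    rw [hx]; simp [Equiv.Perm.mul_apply, Equiv.swap_apply_of_ne_of_ne h13 h14]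
  have hxa2 : x α2 = α1 := by
    rw [hx]; simp [Equiv.Perm.mul_apply, Equiv.swap_apply_of_ne_of_ne h23 h24]
  have hxb1 : x β1 = β2 := by
    rw [hx]
    simp [Equiv.Perm.mul_apply,
      Equiv.swap_apply_of_ne_of_ne (Ne.symm h14) (Ne.symm h24)]
  have hxb2 : x β2 = β1 := by
    rw [hx]
    simp [Equiv.Perm.mul_apply,
      Equiv.swap_apply_of_ne_of_ne (Ne.symm h13) (Ne.symm h23)]
  have hxfix : ∀ ω : Ω, ω ≠ α1 → ω ≠ α2 → ω ≠ β1 → ω ≠ β2 → x ω = ω := by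
    intro ω w1 w2 w3 w4
    rw [hx]
    simp [Equiv.Perm.mul_apply, Equiv.swap_apply_of_ne_of_ne w3 w4,
      Equiv.swap_apply_of_ne_of_ne w1 w2]
  have hxP : ∀ B ∈ P, x '' B ∈ P := fun B hB => hinv x hxG B hB
  by_cases hα2 : α2 ∈ B1
  · -- x '' B1 = B1
    have hxB1 : x '' B1 = B1 := by
      refine uniq _ (hxP B1 hB1) _ hB1 α2 ⟨α1, hα1, hxa1⟩ hα2
    by_cases hβ1 : β1 ∈ B1
    · left
      have hβ2 : β2 ∈ B1 := by
        rw [← hxB1]; exact ⟨β1, hβ1, hxb1⟩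
      intro ω hω
      simp only [Set.mem_insert_iff, Set.mem_singleton_iff] at hω
      rcases hω with rfl | rfl | rfl | rfl <;> assumption
    · -- β1 ∉ B1, then β2 ∉ B1
      have hβ2 : β2 ∉ B1 := by
        intro h
        exact hβ1 (by rw [← hxB1]; exact ⟨β2, h, hxb2⟩)
      right; right
      constructor
      · ext ω
        simp only [Set.mem_inter_iff, Set.mem_insert_iff, Set.mem_singleton_iff]
        constructor
        · rintro ⟨rfl | rfl | rfl | rfl, hωB⟩
          · exact Or.inl rfl
          · exact Or.inr rfl
          · exact absurd hωB hβ1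
          · exact absurd hωB hβ2
        · rintro (rfl | rfl)
          · exact ⟨Or.inl rfl, hα1⟩
          · exact ⟨Or.inr (Or.inl rfl), hα2⟩
      · obtain ⟨B2, ⟨hB2, hβ1B2⟩, -⟩ := hpart β1
        refine ⟨B2, hB2, fun h => hβ1 (h ▸ hβ1B2), ?_⟩
        have hβ2B2 : β2 ∈ B2 := by
          by_contra hβ2B2
          obtain ⟨γ, hγB2, hγβ1⟩ := Set.exists_ne_of_one_lt_ncard
            (lt_of_lt_of_le one_lt_two (hcard B2 hB2)) β1
          have hγα1 : γ ≠ α1 := fun h =>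
            hβ1 ((uniq B2 hB2 B1 hB1 γ hγB2 (h ▸ hα1)) ▸ hβ1B2)
          have hγα2 : γ ≠ α2 := fun h =>
            hβ1 ((uniq B2 hB2 B1 hB1 γ hγB2 (h ▸ hα2)) ▸ hβ1B2)
          have hγβ2 : γ ≠ β2 := fun h => hβ2B2 (h ▸ hγB2)
          have hxB2 : x '' B2 = B2 :=
            uniq _ (hxP B2 hB2) _ hB2 γ
              ⟨γ, hγB2, hxfix γ hγα1 hγα2 hγβ1 hγβ2⟩ hγB2
          exact hβ2B2 (hxB2 ▸ ⟨β1, hβ1B2, hxb1⟩)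
        intro ω hω
        rcases hω with rfl | hω
        · exact hβ1B2
        · exact Set.mem_singleton_iff.mp hω ▸ hβ2B2
  · -- α2 ∉ B1 : then x '' B1 ≠ B1 and B1 ⊆ {α1, β1, β2}
    have hxB1P : x '' B1 ∈ P := hxP B1 hB1
    have hα2x : α2 ∈ x '' B1 := ⟨α1, hα1, hxa1⟩
    have hne : x '' B1 ≠ B1 := fun h => hα2 (h ▸ hα2x)
    have hsub : ∀ ω ∈ B1, ω = α1 ∨ ω = β1 ∨ ω = β2 := by
      intro ω hω
      by_contra h
      push_neg at h
      obtain ⟨w1, w3, w4⟩ := h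
      have w2 : ω ≠ α2 := fun h => hα2 (h ▸ hω)
      exact hne (uniq _ hxB1P _ hB1 ω ⟨ω, hω, hxfix ω w1 w2 w3 w4⟩ hω)
    have hnotboth : ¬ (β1 ∈ B1 ∧ β2 ∈ B1) := by
      rintro ⟨hb1, hb2⟩
      exact hne (uniq _ hxB1P _ hB1 β2 ⟨β1, hb1, hxb1⟩ hb2)
    obtain ⟨γ, hγB1, hγα1⟩ := Set.exists_ne_of_one_lt_ncard
      (lt_of_lt_of_le one_lt_two (hcard B1 hB1)) α1
    have hsize2 : ∀ σ τ : Ω, σ ≠ τ → B1 = {σ, τ} → ∀ B ∈ P, B.ncard = 2 := by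
      intro σ τ hστ hB1eq B hB
      obtain ⟨ω, hωB, -⟩ := Set.exists_ne_of_one_lt_ncard
        (lt_of_lt_of_le one_lt_two (hcard B hB)) σ
      obtain ⟨g, hgG, hgω⟩ := hG α1 ω
      have hgB1 : g '' B1 ∈ P := hinv g hgG B1 hB1
      have : g '' B1 = B := uniq _ hgB1 _ hB ω ⟨α1, hα1, hgω⟩ hωB
      rw [← this, Set.ncard_image_of_injective _ g.injective, hB1eq,
        Set.ncard_pair hστ]
    rcases hsub γ hγB1 with hγ | hγ | hγ
    · exact absurd hγ hγα1
    · -- γ = β1 : B1 = {α1, β1}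
      rw [hγ] at hγB1
      right; left
      have hβ2 : β2 ∉ B1 := fun h => hnotboth ⟨hγB1, h⟩
      have hB1eq : B1 = {α1, β1} := by
        apply Set.eq_of_subset_of_subset
        · intro ω hω
          rcases hsub ω hω with rfl | rfl | rfl
          · exact Or.inl rfl
          · exact Or.inr rfl
          · exact absurd hω hβ2
        · rintro ω (rfl | hω)
          · exact hα1
          · exact Set.mem_singleton_iff.mp hω ▸ hγB1
      refine ⟨β1, β2, Or.inl ⟨rfl, rfl⟩, hB1eq, hsize2 α1 β1 h13 hB1eq, ?_⟩
      have : x '' B1 = {α2, β2} := by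
        rw [hB1eq, Set.image_insert_eq, Set.image_singleton, hxa1, hxb1]
      exact this ▸ hxB1P
    · -- γ = β2 : B1 = {α1, β2}
      rw [hγ] at hγB1
      right; left
      have hβ1' : β1 ∉ B1 := fun h => hnotboth ⟨h, hγB1⟩
      have hB1eq : B1 = {α1, β2} := by
        apply Set.eq_of_subset_of_subset
        · intro ω hω
          rcases hsub ω hω with rfl | rfl | rfl
          · exact Or.inl rfl
          · exact absurd hω hβ1'
          · exact Or.inr rfl
        · rintro ω (rfl | hω)
          · exact hα1
          · exact Set.mem_singleton_iff.mp hω ▸ hγB1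
      refine ⟨β2, β1, Or.inr ⟨rfl, rfl⟩, hB1eq, hsize2 α1 β2 h14 hB1eq, ?_⟩
      have : x '' B1 = {α2, β1} := by
        rw [hB1eq, Set.image_insert_eq, Set.image_singleton, hxa1, hxb2]
      exact this ▸ hxB1P
end

section
/- There are no finite vertex-transitive graphs of motion 3. More precisely, if the automorphism group of a finite vertex-transitive graph Γ contains a 3-cycle, then Aut(Γ) has minimal degree 2. -/
open Equiv Pointwise

/-!
If an automorphism `σ` of a simple graph is the 3-cycle `(a b c)`, then `σ` fixes every other
vertex `v`, so `a` and `b = σ a` have the same adjacency to `v`; and `σ` permutes the three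
pairs inside `{a, b, c}` cyclically, so these are either all edges or all non-edges. Hence the
transposition `(a b)` is an automorphism as well, and the motion is `2`. In particular the
motion is never `3`, since an automorphism moving exactly three vertices is a 3-cycle.
-/

open Equiv.Perm

namespace SimpleGraph

variable {V : Type*} {G : SimpleGraph V}

theorem adj_swap_iff [DecidableEq V] {a b : V}
    (h : ∀ v, v ≠ a → v ≠ b → (G.Adj a v ↔ G.Adj b v)) (u v : V) :
    G.Adj (swap a b u) (swap a b v) ↔ G.Adj u v := by
  rw [swap_apply_def, swap_apply_def]
  split_ifs <;> grind [G.adj_comm, G.irrefl]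

def swapIso [DecidableEq V] {a b : V} (h : ∀ v, v ≠ a → v ≠ b → (G.Adj a v ↔ G.Adj b v)) :
    G ≃g G where
  toEquiv := swap a b
  map_rel_iff' := adj_swap_iff h _ _

theorem adj_iff_adj_apply_of_isThreeCycle [DecidableEq V] [Fintype V] (e : G ≃g G)
    (he : Perm.IsThreeCycle e.toEquiv) {a : V} (ha : a ∈ Perm.support e.toEquiv)
    (v : V) (hva : v ≠ a) (hvb : v ≠ e a) : G.Adj a v ↔ G.Adj (e a) v := by
  by_cases hvc : v = e (e a)
  · have he3 : e (e (e a)) = a :=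
      congrArg (· a) (he.orderOf ▸ pow_orderOf_eq_one e.toEquiv)
    subst hvc
    rw [← e.map_adj_iff (v := e a), he3, G.adj_comm a]
  · have hsupp : Perm.support e.toEquiv = {a, e a, e (e a)} :=
      he.support_eq_iff_mem_support.mpr ha
    have hfix : e v = v := notMem_support.mp (by simp [hsupp, hva, hvb, hvc])
    rw [← e.map_adj_iff, hfix]

end SimpleGraph

section Motion

variable {V : Type*} [Fintype V] [DecidableEq V] {Γ : SimpleGraph V}

theorem exists_card_support_eq_motion_s12 (h : 0 < motion Γ) :
    ∃ e : Γ ≃g Γ, (e.toEquiv : Perm V) ≠ 1 ∧ (Perm.support e.toEquiv).card = motion Γ :=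
  Nat.sInf_mem (Nat.nonempty_of_pos_sInf h)

theorem motion_eq_two_of_isSwap (e : Γ ≃g Γ) (he : Perm.IsSwap e.toEquiv) :
    motion Γ = 2 :=
  le_antisymm (Nat.sInf_le ⟨e, he.isCycle.ne_one, card_support_eq_two.mpr he⟩) <|
    le_csInf ⟨_, e, he.isCycle.ne_one, card_support_eq_two.mpr he⟩ fun _ ⟨_, hf, hn⟩ =>
      hn ▸ one_lt_card_support_of_ne_one hf

theorem motion_eq_two_of_isThreeCycle (e : Γ ≃g Γ) (he : Perm.IsThreeCycle e.toEquiv) :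
    motion Γ = 2 := by
  obtain ⟨a, ha⟩ := he.isCycle.nonempty_support
  have hab : a ≠ e a := fun h => mem_support.mp ha h.symm
  exact motion_eq_two_of_isSwap (SimpleGraph.swapIso
    (SimpleGraph.adj_iff_adj_apply_of_isThreeCycle e he ha)) ⟨a, e a, hab, rfl⟩

end Motion

theorem statement_12_general {V : Type} [Fintype V] [DecidableEq V] (Γ : SimpleGraph V) :
    motion Γ ≠ 3 ∧
    ((∃ e : Γ ≃g Γ, Equiv.Perm.IsCycle (e.toEquiv : Equiv.Perm V) ∧
        (Equiv.Perm.support (e.toEquiv : Equiv.Perm V)).card = 3) →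
      motion Γ = 2) := by
  refine ⟨fun h3 => ?_, fun ⟨e, _, he⟩ =>
    motion_eq_two_of_isThreeCycle e (card_support_eq_three_iff.mp he)⟩
  obtain ⟨e, -, he⟩ := exists_card_support_eq_motion_s12 (Γ := Γ) (by omega)
  rw [h3] at he
  have h2 := motion_eq_two_of_isThreeCycle e (card_support_eq_three_iff.mp he)
  omega

/-- There are no finite vertex-transitive graphs of motion 3;
more precisely, if the automorphism group of a finite vertex-transitive graph
contains a 3-cycle then it has minimal degree 2. -/
theorem statement_12 {V : Type} [Fintype V] [DecidableEq V] (Γ : SimpleGraph V)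
    (hvt : IsVertexTransitive Γ) :
    motion Γ ≠ 3 ∧
    ((∃ e : Γ ≃g Γ, Equiv.Perm.IsCycle (e.toEquiv : Equiv.Perm V) ∧
        (Equiv.Perm.support (e.toEquiv : Equiv.Perm V)).card = 3) →
      motion Γ = 2) :=
  statement_12_general Γ
end

section
/- There is no finite vertex-transitive graph with motion p for any prime p ≥ 5. More precisely, if Γ is a finite vertex-transitive graph whose automorphism group contains a p-cycle for a prime p ≥ 5, then Γ ≅ Θ[Δ], where Θ is a vertex-transitive graph and Δ is either K_m or mK_1 for some m ≥ 2, or a circulant graph on p vertices. -/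
open Equiv Pointwise

/-- The lexicographic product `Θ[Δ]`: the vertex set is `VΔ × VΘ`, and
`(δ₁,θ₁) ∼ (δ₂,θ₂)` iff `θ₁ ∼ θ₂` in `Θ`, or `θ₁ = θ₂` and `δ₁ ∼ δ₂` in `Δ`. -/
def lexProd {α β : Type*} (Θ : SimpleGraph α) (Δ : SimpleGraph β) :
    SimpleGraph (β × α) :=
  SimpleGraph.fromRel (fun x y => Θ.Adj x.2 y.2 ∨ (x.2 = y.2 ∧ Δ.Adj x.1 y.1))

/-- A circulant graph on `ZMod p`: a Cayley graph of the cyclic group of order `p`,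
i.e. a graph invariant under all translations. -/
def IsCirculant {p : ℕ} (Sg : SimpleGraph (ZMod p)) : Prop :=
  ∀ c x y : ZMod p, Sg.Adj x y ↔ Sg.Adj (x + c) (y + c)


/-!
A `p`-cycle automorphism `σ` makes every vertex outside its support adjacent to all or none of
the support, and in the coordinates `i ↦ σ ^ i x` the support induces a circulant graph on
`ZMod p`. The reflection `i ↦ -i` of the support is therefore an automorphism moving fewer than
`p` vertices. Since an automorphism of minimal degree `p` has a power that is a `p`-cycle, the
motion is never `p`.

If `Γ` has twins (equal open or closed neighbourhoods), the twin classes are modules of equal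
size inducing `mK₁` or `K_m`, and `Γ` is the lexicographic product of its quotient by them with
that graph. Otherwise two supports of `p`-cycle automorphisms that meet are equal: if `C` met `D`
properly, adjacency across the cut `D ∩ C | D \ C` would be constant, and since every nonzero
residue is a step from `D \ C` into `D ∩ C`, the circulant on `D` would be complete or empty,
turning `D` into a set of twins. Hence the conjugates of `σ` partition the vertices into modules,
each a copy of one circulant graph.
-/

open Finset Function

/-! ## Automorphisms and their cycles -/

namespace SimpleGraph

variable {V : Type*} {Γ : SimpleGraph V}

variable (Γ) in
def autGroup : Subgroup (Perm V) where
  carrier := {σ | ∀ u v, Γ.Adj (σ u) (σ v) ↔ Γ.Adj u v}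
  one_mem' _ _ := Iff.rfl
  mul_mem' hσ hτ u v := (hσ _ _).trans (hτ u v)
  inv_mem' {σ} hσ u v := by simpa using (hσ (σ⁻¹ u) (σ⁻¹ v)).symm

theorem Iso.toEquiv_mem_autGroup (e : Γ ≃g Γ) : e.toEquiv ∈ Γ.autGroup :=
  fun _ _ => e.map_adj_iff

theorem adj_iff_of_sameCycle {σ : Perm V} (hσ : σ ∈ Γ.autGroup) {w u v : V} (hw : σ w = w)
    (h : σ.SameCycle u v) : Γ.Adj w u ↔ Γ.Adj w v := by
  obtain ⟨i, rfl⟩ := h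
  simpa [Perm.zpow_apply_eq_self_of_apply_eq_self hw] using ((zpow_mem hσ i) w u).symm

variable [DecidableEq V] [Fintype V]

theorem adj_iff_of_mem_support {σ : Perm V} (hσ : σ ∈ Γ.autGroup) (hc : σ.IsCycle)
    {w u v : V} (hw : w ∉ σ.support) (hu : u ∈ σ.support) (hv : v ∈ σ.support) :
    Γ.Adj w u ↔ Γ.Adj w v :=
  adj_iff_of_sameCycle hσ (Perm.notMem_support.mp hw)
    (hc.sameCycle (Perm.mem_support.mp hu) (Perm.mem_support.mp hv))

end SimpleGraph

namespace Equiv.Perm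

variable {V : Type*} {σ : Perm V} {n : ℕ}

def cycleCoord (σ : Perm V) (x : V) (i : ZMod n) : V := (σ ^ i.val) x

section Finite

variable [Finite V]

theorem cycleCoord_add (hn : orderOf σ = n) (x : V) (i j : ZMod n) :
    cycleCoord σ x (i + j) = (σ ^ j.val) (cycleCoord σ x i) := by
  have : NeZero n := ⟨hn ▸ (orderOf_pos σ).ne'⟩
  have h := pow_mod_orderOf σ (i.val + j.val)
  rw [hn] at h
  rw [cycleCoord, cycleCoord, ZMod.val_add, h, ← mul_apply, ← pow_add, add_comm]

theorem cycleCoord_natCast (hn : orderOf σ = n) (x : V) (k : ℕ) :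
    cycleCoord σ x (k : ZMod n) = (σ ^ k) x := by
  have : NeZero n := ⟨hn ▸ (orderOf_pos σ).ne'⟩
  have h := pow_mod_orderOf σ k
  rw [hn] at h
  rw [cycleCoord, ZMod.val_natCast, h]

end Finite

variable [DecidableEq V] [Fintype V]

theorem cycleCoord_mem_support {x : V} (hx : x ∈ σ.support) (i : ZMod n) :
    cycleCoord σ x i ∈ σ.support :=
  pow_apply_mem_support.mpr hx

theorem cycleCoord_injective (hc : σ.IsCycle) (hn : orderOf σ = n) {x : V}
    (hx : x ∈ σ.support) : Injective (cycleCoord σ x (n := n)) := by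
  intro i j hij
  have h : σ ^ i.val = σ ^ j.val := hc.pow_eq_pow_iff.mpr ⟨x, mem_support.mp hx, hij⟩
  have : NeZero n := ⟨hn ▸ (orderOf_pos σ).ne'⟩
  rw [pow_eq_pow_iff_modEq, hn, ← ZMod.natCast_eq_natCast_iff] at h
  simpa only [ZMod.natCast_val, ZMod.cast_id] using h

theorem range_cycleCoord (hc : σ.IsCycle) (hn : orderOf σ = n) {x : V} (hx : x ∈ σ.support) :
    Set.range (cycleCoord σ x (n := n)) = σ.support := by
  refine Set.Subset.antisymm (Set.range_subset_iff.mpr (cycleCoord_mem_support hx)) ?_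
  intro y hy
  obtain ⟨k, rfl⟩ := hc.exists_pow_eq (mem_support.mp hx) (mem_support.mp hy)
  exact ⟨k, cycleCoord_natCast hn x k⟩

end Equiv.Perm

/-! ## Circulant graphs -/

theorem IsCirculant.adj_neg_neg {n : ℕ} {G : SimpleGraph (ZMod n)} (hG : IsCirculant G)
    (a b : ZMod n) : G.Adj (-a) (-b) ↔ G.Adj a b := by
  rw [hG (a + b), show -a + (a + b) = b by ring, show -b + (a + b) = a by ring, G.adj_comm]

theorem ZMod.exists_notMem_add_mem {p : ℕ} (hp : p.Prime) {T : Set (ZMod p)} {t₀ w₀ : ZMod p}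
    (ht₀ : t₀ ∈ T) (hw₀ : w₀ ∉ T) {d : ZMod p} (hd : d ≠ 0) : ∃ w ∉ T, w + d ∈ T := by
  have : Fact p.Prime := ⟨hp⟩
  by_contra! h
  have hk : ∀ k : ℕ, w₀ + k * d ∉ T := by
    intro k
    induction k with
    | zero => simpa using hw₀
    | succ k ih => simpa [add_mul, ← add_assoc] using h _ ih
  -- `d` generates `ZMod p`, so walking from `w₀` in steps of `d` reaches `t₀`
  apply hk ((t₀ - w₀) / d).val
  simpa [div_mul_cancel₀ _ hd] using ht₀

theorem IsCirculant.adj_iff_of_adj_across {p : ℕ} (hp : p.Prime) {G : SimpleGraph (ZMod p)}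
    (hG : IsCirculant G) {T : Set (ZMod p)} {t₀ w₀ : ZMod p} (ht₀ : t₀ ∈ T) (hw₀ : w₀ ∉ T)
    {ε : Prop} (hε : ∀ w ∉ T, ∀ t ∈ T, G.Adj w t ↔ ε) {x y : ZMod p} (hxy : x ≠ y) :
    G.Adj x y ↔ ε := by
  obtain ⟨w, hw, hwd⟩ := ZMod.exists_notMem_add_mem hp ht₀ hw₀ (sub_ne_zero.mpr hxy.symm)
  rw [hG (w - x), add_sub_cancel, ← add_sub_assoc, add_sub_right_comm, add_comm]
  exact hε w hw _ hwd

theorem SimpleGraph.isCirculant_comap_cycleCoord {V : Type*} [Finite V] {Γ : SimpleGraph V}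
    {σ : Perm V} (hσ : σ ∈ Γ.autGroup) {n : ℕ} (hn : orderOf σ = n) (x : V) :
    IsCirculant (Γ.comap (σ.cycleCoord x (n := n))) := by
  intro c a b
  simp only [comap_adj, Perm.cycleCoord_add hn]
  exact (pow_mem hσ _ _ _).symm

/-! ## Motion -/

theorem Subgroup.exists_isCycle_card_support_eq {V : Type*} [DecidableEq V] [Fintype V]
    (G : Subgroup (Perm V)) {p : ℕ} (hp : p.Prime) {g : Perm V} (hg : g ∈ G) (hg1 : g ≠ 1)
    (hgp : #g.support = p) (hmin : ∀ σ ∈ G, σ ≠ 1 → p ≤ #σ.support) :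
    ∃ σ ∈ G, σ.IsCycle ∧ #σ.support = p := by
  set q := (orderOf g).minFac
  have hq : q.Prime := Nat.minFac_prime (by rwa [ne_eq, orderOf_eq_one_iff])
  set f := g ^ (orderOf g / q)
  have hfq : orderOf f = q := orderOf_pow_orderOf_div (orderOf_pos g).ne' (Nat.minFac_dvd _)
  have hf1 : f ≠ 1 := fun h => hq.ne_one (by rw [← hfq, h, orderOf_one])
  have hfp : #f.support = p :=
    le_antisymm (hgp ▸ card_le_card (Perm.support_pow_le g _)) (hmin f (pow_mem hg _) hf1)
  obtain ⟨k, hk⟩ := Perm.cycleType_prime_order (hfq ▸ hq)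
  have hsum : #f.support = (k + 1) * q := by
    rw [← Perm.sum_cycleType, hk, Multiset.sum_replicate, smul_eq_mul, hfq]
  have hqp : q = p := (Nat.prime_dvd_prime_iff_eq hq hp).mp ⟨k + 1, by rw [← hfp, hsum, mul_comm]⟩
  refine ⟨f, pow_mem hg _, Perm.isCycle_of_prime_order (hfq ▸ hq) ?_, hfp⟩
  rw [hfp, hfq, hqp]
  linarith [hp.pos]

namespace SimpleGraph

open Equiv.Perm

variable {V : Type*} [DecidableEq V] [Fintype V] {Γ : SimpleGraph V} {σ : Perm V}

theorem ofSubtype_mem_autGroup (hσ : σ ∈ Γ.autGroup) (hc : σ.IsCycle)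
    {π : Perm σ.support} (hπ : ∀ u v, Γ.Adj (π u) (π v) ↔ Γ.Adj u v) :
    ofSubtype π ∈ Γ.autGroup := by
  intro u v
  by_cases hu : u ∈ σ.support <;> by_cases hv : v ∈ σ.support
  · simpa [ofSubtype_apply_of_mem, hu, hv] using hπ ⟨u, hu⟩ ⟨v, hv⟩
  · rw [ofSubtype_apply_of_mem _ hu, ofSubtype_apply_of_not_mem _ hv, Γ.adj_comm _ v,
      Γ.adj_comm u, adj_iff_of_mem_support hσ hc hv (π ⟨u, hu⟩).2 hu]
  · rw [ofSubtype_apply_of_not_mem _ hu, ofSubtype_apply_of_mem _ hv,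
      adj_iff_of_mem_support hσ hc hu (π ⟨v, hv⟩).2 hv]
  · rw [ofSubtype_apply_of_not_mem _ hu, ofSubtype_apply_of_not_mem _ hv]

theorem exists_mem_autGroup_card_support_lt (hσ : σ ∈ Γ.autGroup) (hc : σ.IsCycle)
    (h3 : 3 ≤ #σ.support) : ∃ τ ∈ Γ.autGroup, τ ≠ 1 ∧ #τ.support < #σ.support := by
  set n := #σ.support
  have hn : orderOf σ = n := hc.orderOf
  have : Fact (2 < n) := ⟨h3⟩
  obtain ⟨x, hx, -⟩ := id hc
  replace hx : x ∈ σ.support := Perm.mem_support.mpr hx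
  let e : ZMod n ≃ σ.support := Equiv.ofBijective
    (fun i => ⟨cycleCoord σ x i, cycleCoord_mem_support hx i⟩)
    ⟨fun i j h => cycleCoord_injective hc hn hx (congrArg Subtype.val h), fun y => by
      obtain ⟨i, hi⟩ := (range_cycleCoord hc hn hx).ge y.2
      exact ⟨i, Subtype.ext hi⟩⟩
  -- the reflection `i ↦ -i` in cycle coordinates; it fixes `x`
  let π : Perm σ.support := e.permCongr (Equiv.neg (ZMod n))
  have hπ : ∀ u v, Γ.Adj (π u) (π v) ↔ Γ.Adj u v := by
    intro u v
    obtain ⟨a, rfl⟩ := e.surjective u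
    obtain ⟨b, rfl⟩ := e.surjective v
    simp only [π, permCongr_apply, symm_apply_apply, Equiv.neg_apply]
    exact (isCirculant_comap_cycleCoord hσ hn x).adj_neg_neg a b
  have hπ1 : π ≠ 1 := fun h =>
    ZMod.neg_one_ne_one (e.injective (by simpa [π] using DFunLike.congr_fun h (e 1)))
  refine ⟨ofSubtype π, ofSubtype_mem_autGroup hσ hc hπ,
    fun h => hπ1 (ofSubtype_injective (h.trans (map_one _).symm)), ?_⟩
  rw [support_ofSubtype, card_map]
  have hfix : e 0 ∉ π.support := by simp [π]
  convert (card_lt_univ_of_notMem hfix).trans_eq (Fintype.card_coe σ.support)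

theorem motion_le (hσ : σ ∈ Γ.autGroup) (h1 : σ ≠ 1) : motion Γ ≤ #σ.support :=
  Nat.sInf_le ⟨⟨σ, hσ _ _⟩, h1, rfl⟩

theorem exists_mem_autGroup_card_support_eq_motion (h : motion Γ ≠ 0) :
    ∃ σ ∈ Γ.autGroup, σ ≠ 1 ∧ #σ.support = motion Γ := by
  obtain ⟨e, he1, he⟩ := Nat.sInf_mem (Nat.nonempty_of_pos_sInf (Nat.pos_of_ne_zero h))
  exact ⟨e.toEquiv, Iso.toEquiv_mem_autGroup e, he1, he⟩

theorem motion_ne_of_prime {p : ℕ} (hp : p.Prime) (hp3 : 3 ≤ p) : motion Γ ≠ p := by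
  intro h
  obtain ⟨g, hg, hg1, hgp⟩ := exists_mem_autGroup_card_support_eq_motion (Γ := Γ) (by omega)
  have hmin : ∀ σ ∈ Γ.autGroup, σ ≠ 1 → p ≤ #σ.support := fun σ hσ h1 => h ▸ motion_le hσ h1
  obtain ⟨σ, hσ, hc, hσp⟩ :=
    Γ.autGroup.exists_isCycle_card_support_eq hp hg hg1 (hgp.trans h) hmin
  obtain ⟨τ, hτ, hτ1, hlt⟩ := exists_mem_autGroup_card_support_lt hσ hc (hσp ▸ hp3)
  exact absurd (hmin τ hτ hτ1) (by omega)

end SimpleGraph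

/-! ## Lexicographic decompositions -/

section LexProd

variable {α α' β : Type*} {Θ : SimpleGraph α} {Θ' : SimpleGraph α'} {Δ : SimpleGraph β}

@[simp]
theorem lexProd_adj {x y : β × α} :
    (lexProd Θ Δ).Adj x y ↔ Θ.Adj x.2 y.2 ∨ (x.2 = y.2 ∧ Δ.Adj x.1 y.1) := by
  rw [lexProd, SimpleGraph.fromRel_adj]
  constructor
  · rintro ⟨-, h | h | ⟨h₁, h₂⟩⟩
    · exact h
    · exact Or.inl h.symm
    · exact Or.inr ⟨h₁.symm, h₂.symm⟩
  · rintro (h | ⟨h₁, h₂⟩)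
    · exact ⟨fun hxy => h.ne (congrArg Prod.snd hxy), Or.inl (Or.inl h)⟩
    · exact ⟨fun hxy => h₂.ne (congrArg Prod.fst hxy), Or.inl (Or.inr ⟨h₁, h₂⟩)⟩

def SimpleGraph.Iso.lexProdLeft (e : Θ ≃g Θ') (Δ : SimpleGraph β) :
    lexProd Θ Δ ≃g lexProd Θ' Δ where
  toEquiv := (Equiv.refl β).prodCongr e.toEquiv
  map_rel_iff' := by simp [e.map_adj_iff]

theorem IsVertexTransitive.of_iso (e : Θ ≃g Θ') (hΘ : IsVertexTransitive Θ) :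
    IsVertexTransitive Θ' := fun u v => by
  obtain ⟨g, hg⟩ := hΘ (e.symm u) (e.symm v)
  exact ⟨(e.symm.trans g).trans e, by simp [hg]⟩

end LexProd

namespace SimpleGraph

variable {V β : Type*} {Γ : SimpleGraph V} {Δ : SimpleGraph β}

variable (Γ Δ) in
def HasLexFactor : Prop :=
  ∃ (k : ℕ) (Θ : SimpleGraph (Fin k)), IsVertexTransitive Θ ∧ Nonempty (Γ ≃g lexProd Θ Δ)

theorem hasLexFactor_of_iso {ι : Type*} [Fintype ι] {Θ : SimpleGraph ι}
    (hΘ : IsVertexTransitive Θ) (e : Γ ≃g lexProd Θ Δ) : HasLexFactor Γ Δ :=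
  let f := Iso.map (Fintype.equivFin ι) Θ
  ⟨_, _, hΘ.of_iso f, ⟨e.trans (f.lexProdLeft Δ)⟩⟩

section Quotient

variable {s : Setoid V}

theorem map_mk_adj_mk (hmod : ∀ u u' v, s u u' → ¬ s u v → Γ.Adj u v → Γ.Adj u' v) {u v : V} :
    (Γ.map (Quotient.mk s)).Adj ⟦u⟧ ⟦v⟧ ↔ ¬ s u v ∧ Γ.Adj u v := by
  rw [map_adj']
  constructor
  · rintro ⟨hne, u', v', hadj, hu, hv⟩
    have hu' : s u' u := Quotient.exact hu
    have hv' : s v' v := Quotient.exact hv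
    refine ⟨fun h => hne (Quotient.sound h), ?_⟩
    have huv' : ¬ s u' v' := fun h => hne (hu ▸ hv ▸ Quotient.sound h)
    have h₁ : Γ.Adj u v' := hmod u' u v' hu' huv' hadj
    exact (hmod v' v u hv' (fun h => huv' (s.trans hu' (s.symm h))) h₁.symm).symm
  · rintro ⟨hne, hadj⟩
    exact ⟨fun h => hne (Quotient.exact h), u, v, hadj, rfl, rfl⟩

theorem isVertexTransitive_map_mk (hvt : IsVertexTransitive Γ)
    (hinv : ∀ g : Γ ≃g Γ, ∀ u v, s u v → s (g u) (g v))
    (hmod : ∀ u u' v, s u u' → ¬ s u v → Γ.Adj u v → Γ.Adj u' v) :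
    IsVertexTransitive (Γ.map (Quotient.mk s)) := by
  intro i j
  induction i, j using Quotient.inductionOn₂ with
  | h u v =>
  obtain ⟨g, hg⟩ := hvt u v
  have hg' : ∀ a b, s a b ↔ s (g a) (g b) := fun a b =>
    ⟨hinv g a b, fun h => by simpa using hinv g.symm _ _ h⟩
  let φ : Quotient s ≃ Quotient s := Quotient.congr g.toEquiv hg'
  refine ⟨⟨φ, @fun i j => ?_⟩, by simp [φ, hg]⟩
  induction i, j using Quotient.inductionOn₂ with
  | h a b =>
    simp only [φ, Quotient.congr_mk]
    rw [map_mk_adj_mk hmod, map_mk_adj_mk hmod]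
    exact and_congr (hg' a b).symm.not g.map_adj_iff

theorem nonempty_iso_lexProd_map_mk
    (hmod : ∀ u u' v, s u u' → ¬ s u v → Γ.Adj u v → Γ.Adj u' v)
    (hΔ : ∀ v, ∃ f : Δ ↪g Γ, Set.range f = {w | s v w}) :
    Nonempty (Γ ≃g lexProd (Γ.map (Quotient.mk s)) Δ) := by
  choose f hf using fun i : Quotient s => hΔ i.out
  have hmk : ∀ i b, ⟦f i b⟧ = i := fun i b =>
    (Quotient.sound ((hf i).le ⟨b, rfl⟩ : s i.out (f i b))).symm.trans i.out_eq
  let Ψ : β × Quotient s → V := fun x => f x.2 x.1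
  have hΨ : Bijective Ψ := by
    refine ⟨fun ⟨b, i⟩ ⟨b', j⟩ h => ?_, fun v => ?_⟩
    · obtain rfl : i = j := (hmk i b).symm.trans ((congrArg _ h).trans (hmk j b'))
      exact Prod.ext ((f i).injective h) rfl
    · obtain ⟨b, hb⟩ := (hf ⟦v⟧).ge (Quotient.mk_out v : s _ v)
      exact ⟨(b, ⟦v⟧), hb⟩
  refine ⟨(RelIso.mk (Equiv.ofBijective Ψ hΨ) @fun x y => ?_).symm⟩
  obtain ⟨b, i⟩ := x
  obtain ⟨b', j⟩ := y
  simp only [Equiv.ofBijective_apply, lexProd_adj, Ψ]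
  by_cases hij : i = j
  · subst hij
    rw [(f i).map_adj_iff]
    simp only [SimpleGraph.irrefl, true_and, false_or]
  · have hQ := map_mk_adj_mk hmod (u := f i b) (v := f j b')
    rw [hmk, hmk] at hQ
    have hns : ¬ s (f i b) (f j b') := fun h =>
      hij ((hmk i b).symm.trans ((Quotient.sound h).trans (hmk j b')))
    simp only [hQ, hns, hij, not_false_eq_true, true_and, false_and, or_false]

theorem hasLexFactor_of_setoid [Fintype V] (hvt : IsVertexTransitive Γ)
    (hinv : ∀ g : Γ ≃g Γ, ∀ u v, s u v → s (g u) (g v))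
    (hmod : ∀ u u' v, s u u' → ¬ s u v → Γ.Adj u v → Γ.Adj u' v)
    (hΔ : ∀ v, ∃ f : Δ ↪g Γ, Set.range f = {w | s v w}) : HasLexFactor Γ Δ := by
  classical
  obtain ⟨e⟩ := nonempty_iso_lexProd_map_mk hmod hΔ
  exact hasLexFactor_of_iso (isVertexTransitive_map_mk hvt hinv hmod) e

end Quotient

/-! ## Graphs with twins -/

def closedNeighborSet (Γ : SimpleGraph V) (v : V) : Set V := insert v (Γ.neighborSet v)

theorem Iso.image_closedNeighborSet (g : Γ ≃g Γ) (v : V) :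
    g '' Γ.closedNeighborSet v = Γ.closedNeighborSet (g v) := by
  rw [closedNeighborSet, Set.image_insert_eq, Iso.image_neighborSet, closedNeighborSet]

section Twins

variable {s : Setoid V}

theorem exists_embedding_range_eq [Finite V] (hvt : IsVertexTransitive Γ)
    (hinv : ∀ g : Γ ≃g Γ, ∀ u v, s u v → s (g u) (g v)) (v₀ v : V) :
    ∃ f : Fin (Nat.card {w // s v₀ w}) ↪ V, Set.range f = {w | s v w} := by
  obtain ⟨g, rfl⟩ := hvt v₀ v
  let E : Fin (Nat.card {w // s v₀ w}) ≃ {w // s (g v₀) w} := (Finite.equivFin _).symm.trans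
    (g.toEquiv.subtypeEquiv fun w => ⟨hinv g _ _, fun h => by simpa using hinv g.symm _ _ h⟩)
  exact ⟨E.toEmbedding.trans (Embedding.subtype _),
    (E.surjective.range_comp Subtype.val).trans Subtype.range_coe_subtype⟩

theorem exists_two_le_hasLexFactor_fin [Fintype V] (hvt : IsVertexTransitive Γ)
    (hinv : ∀ g : Γ ≃g Γ, ∀ u v, s u v → s (g u) (g v))
    (hmod : ∀ u u' v, s u u' → ¬ s u v → Γ.Adj u v → Γ.Adj u' v) {u v : V} (huv : s u v)
    (hne : u ≠ v) (D : ∀ m, SimpleGraph (Fin m))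
    (hD : ∀ m (f : Fin m ↪ V), (∀ a b, s (f a) (f b)) → ∀ a b, Γ.Adj (f a) (f b) ↔ (D m).Adj a b) :
    ∃ m, 2 ≤ m ∧ HasLexFactor Γ (D m) := by
  refine ⟨Nat.card {w // s u w}, ?_, hasLexFactor_of_setoid hvt hinv hmod fun w => ?_⟩
  · have : Nontrivial {w // s u w} :=
      ⟨⟨u, s.refl u⟩, ⟨v, huv⟩, fun h => hne (congrArg Subtype.val h)⟩
    exact Finite.one_lt_card_iff_nontrivial.mpr this
  · obtain ⟨f, hf⟩ := exists_embedding_range_eq hvt hinv u w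
    have hs : ∀ a b, s (f a) (f b) := fun a b =>
      s.trans (s.symm (hf.le ⟨a, rfl⟩)) (hf.le ⟨b, rfl⟩)
    exact ⟨⟨f, hD _ f hs _ _⟩, hf⟩

theorem exists_hasLexFactor_bot_of_not_injective [Fintype V] (hvt : IsVertexTransitive Γ)
    (h : ¬ Injective Γ.neighborSet) : ∃ m, 2 ≤ m ∧ HasLexFactor Γ (⊥ : SimpleGraph (Fin m)) := by
  obtain ⟨u, v, huv, hne⟩ := not_injective_iff.mp h
  refine exists_two_le_hasLexFactor_fin (s := Setoid.ker Γ.neighborSet) hvt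
    (fun g a b (h : _ = _) => ?_) (fun a a' b (h : _ = _) _ hab => ?_) huv hne _
    fun m f hs a b => iff_of_false (fun hab => ?_) id
  · show _ = _
    rw [← g.image_neighborSet, h, g.image_neighborSet]
  · exact (h ▸ hab : b ∈ Γ.neighborSet a')
  · exact Γ.irrefl ((hs a b : _ = _) ▸ hab : f b ∈ Γ.neighborSet (f b))

theorem exists_hasLexFactor_top_of_not_injective [Fintype V] (hvt : IsVertexTransitive Γ)
    (h : ¬ Injective Γ.closedNeighborSet) :
    ∃ m, 2 ≤ m ∧ HasLexFactor Γ (⊤ : SimpleGraph (Fin m)) := by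
  obtain ⟨u, v, huv, hne⟩ := not_injective_iff.mp h
  refine exists_two_le_hasLexFactor_fin (s := Setoid.ker Γ.closedNeighborSet) hvt
    (fun g a b (h : _ = _) => ?_) (fun a a' b (h : _ = _) hab hadj => ?_) huv hne _
    fun m f hs a b => ⟨fun hab h => hab.ne (congrArg f h), fun hab => ?_⟩
  · show _ = _
    rw [← g.image_closedNeighborSet, h, g.image_closedNeighborSet]
  · have hb : b ∈ Γ.closedNeighborSet a' := h ▸ Set.mem_insert_of_mem _ hadj
    refine (Set.mem_insert_iff.mp hb).resolve_left fun hba => hab ?_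
    exact (hba ▸ h : _ = _)
  · have hb : f b ∈ Γ.closedNeighborSet (f a) := (hs a b : _ = _) ▸ Set.mem_insert _ _
    exact (Set.mem_insert_iff.mp hb).resolve_left fun h => hab (f.injective h).symm

end Twins

/-! ## Twin-free graphs -/

open Equiv.Perm

variable [DecidableEq V] [Fintype V] {σ τ : Perm V} {p : ℕ}

theorem eq_of_mem_support_of_forall_adj_iff (hN : Injective Γ.neighborSet)
    (hN' : Injective Γ.closedNeighborSet) (hσ : σ ∈ Γ.autGroup) (hc : σ.IsCycle) {ε : Prop}
    (hε : ∀ u ∈ σ.support, ∀ v ∈ σ.support, u ≠ v → (Γ.Adj u v ↔ ε)) {u v : V}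
    (hu : u ∈ σ.support) (hv : v ∈ σ.support) : u = v := by
  have hout : ∀ z ∉ σ.support, Γ.Adj u z ↔ Γ.Adj v z := fun z hz => by
    rw [Γ.adj_comm u, Γ.adj_comm v]
    exact adj_iff_of_mem_support hσ hc hz hu hv
  have hin : ∀ w ∈ σ.support, ∀ z ∈ σ.support, Γ.Adj w z ↔ w ≠ z ∧ ε := fun w hw z hz => by
    by_cases hwz : w = z
    · simp [hwz]
    · simp [hwz, hε w hw z hz hwz]
  by_cases hε' : ε
  · apply hN'
    ext z
    simp only [closedNeighborSet, Set.mem_insert_iff, mem_neighborSet]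
    by_cases hz : z ∈ σ.support
    · simp only [hin u hu z hz, hin v hv z hz, hε', and_true]
      tauto
    · rw [hout z hz, eq_false (ne_of_mem_of_not_mem hu hz).symm,
        eq_false (ne_of_mem_of_not_mem hv hz).symm]
  · apply hN
    ext z
    by_cases hz : z ∈ σ.support
    · simp [hin u hu z hz, hin v hv z hz, hε']
    · exact hout z hz

theorem forall_adj_iff_of_adj_across (hp : p.Prime) (hσ : σ ∈ Γ.autGroup) (hc : σ.IsCycle)
    (hσp : #σ.support = p) {T : Set V} {t₀ w₀ : V} (ht₀ : t₀ ∈ σ.support) (ht₀T : t₀ ∈ T)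
    (hw₀ : w₀ ∈ σ.support) (hw₀T : w₀ ∉ T) {ε : Prop}
    (hε : ∀ w ∈ σ.support, w ∉ T → ∀ t ∈ σ.support, t ∈ T → (Γ.Adj w t ↔ ε)) :
    ∀ u ∈ σ.support, ∀ v ∈ σ.support, u ≠ v → (Γ.Adj u v ↔ ε) := by
  have hn : orderOf σ = p := hc.orderOf.trans hσp
  have hψ : ∀ u ∈ σ.support, ∃ i, cycleCoord σ t₀ (n := p) i = u := fun u hu =>
    (range_cycleCoord hc hn ht₀).ge hu
  obtain ⟨i₀, hi₀⟩ := hψ _ ht₀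
  obtain ⟨j₀, hj₀⟩ := hψ _ hw₀
  intro u hu v hv huv
  obtain ⟨i, rfl⟩ := hψ u hu
  obtain ⟨j, rfl⟩ := hψ v hv
  have hmem := cycleCoord_mem_support (n := p) ht₀
  exact (isCirculant_comap_cycleCoord hσ hn t₀).adj_iff_of_adj_across hp
    (T := cycleCoord σ t₀ ⁻¹' T) (t₀ := i₀) (w₀ := j₀) (by rwa [Set.mem_preimage, hi₀])
    (by rwa [Set.mem_preimage, hj₀])
    (fun w hw t ht => hε _ (hmem w) hw _ (hmem t) ht) (fun h => huv (h ▸ rfl))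

theorem support_eq_or_disjoint (hN : Injective Γ.neighborSet)
    (hN' : Injective Γ.closedNeighborSet) (hp : p.Prime) (hσ : σ ∈ Γ.autGroup)
    (hcσ : σ.IsCycle) (hσp : #σ.support = p) (hτ : τ ∈ Γ.autGroup) (hcτ : τ.IsCycle)
    (hτp : #τ.support = p) : σ.support = τ.support ∨ Disjoint σ.support τ.support := by
  by_contra! ⟨hne, hnd⟩
  obtain ⟨t₀, ht₀σ, ht₀τ⟩ := not_disjoint_iff.mp hnd
  obtain ⟨u₀, hu₀σ, hu₀τ⟩ := not_subset.mp fun h => hne (eq_of_subset_of_card_le h (by omega))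
  obtain ⟨w₀, hw₀τ, hw₀σ⟩ :=
    not_subset.mp fun h => hne (eq_of_subset_of_card_le h (by omega)).symm
  have hcross : ∀ w ∈ τ.support, w ∉ σ.support → ∀ t ∈ τ.support, t ∈ σ.support →
      (Γ.Adj w t ↔ Γ.Adj w₀ u₀) := fun w hw hwσ t _ htσ => by
    rw [adj_iff_of_mem_support hσ hcσ hwσ htσ hu₀σ, Γ.adj_comm, Γ.adj_comm w₀]
    exact adj_iff_of_mem_support hτ hcτ hu₀τ hw hw₀τ
  exact ne_of_mem_of_not_mem ht₀σ hw₀σ (eq_of_mem_support_of_forall_adj_iff hN hN' hτ hcτ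
    (forall_adj_iff_of_adj_across hp hτ hcτ hτp (T := σ.support) ht₀τ ht₀σ hw₀τ hw₀σ hcross)
    ht₀τ hw₀τ)

theorem exists_isCycle_support_eq_map (g : Γ ≃g Γ) (hτ : τ ∈ Γ.autGroup) (hc : τ.IsCycle) :
    ∃ τ' ∈ Γ.autGroup, τ'.IsCycle ∧ τ'.support = τ.support.map g.toEquiv.toEmbedding :=
  ⟨_, mul_mem (mul_mem (Iso.toEquiv_mem_autGroup g) hτ) (inv_mem (Iso.toEquiv_mem_autGroup g)),
    hc.conj, support_conj⟩

variable (Γ p) in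
def SameAutCycle (u v : V) : Prop :=
  ∃ τ ∈ Γ.autGroup, τ.IsCycle ∧ #τ.support = p ∧ u ∈ τ.support ∧ v ∈ τ.support

theorem SameAutCycle.map (g : Γ ≃g Γ) {u v : V} (h : SameAutCycle Γ p u v) :
    SameAutCycle Γ p (g u) (g v) := by
  obtain ⟨τ, hτ, hc, hτp, hu, hv⟩ := h
  obtain ⟨τ', hτ', hc', hsupp⟩ := exists_isCycle_support_eq_map g hτ hc
  exact ⟨τ', hτ', hc', by rw [hsupp, card_map, hτp], hsupp ▸ mem_map_of_mem _ hu,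
    hsupp ▸ mem_map_of_mem _ hv⟩

theorem sameAutCycle_iff_mem_support (hN : Injective Γ.neighborSet)
    (hN' : Injective Γ.closedNeighborSet) (hp : p.Prime) (hτ : τ ∈ Γ.autGroup)
    (hc : τ.IsCycle) (hτp : #τ.support = p) {u v : V} (hu : u ∈ τ.support) :
    SameAutCycle Γ p u v ↔ v ∈ τ.support := by
  refine ⟨fun ⟨τ', hτ', hc', hτ'p, hu', hv'⟩ => ?_, fun hv => ⟨τ, hτ, hc, hτp, hu, hv⟩⟩
  rwa [← (support_eq_or_disjoint hN hN' hp hτ' hc' hτ'p hτ hc hτp).resolve_right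
    (not_disjoint_iff.mpr ⟨u, hu', hu⟩)]

theorem hasLexFactor_comap_cycleCoord (hvt : IsVertexTransitive Γ)
    (hN : Injective Γ.neighborSet) (hN' : Injective Γ.closedNeighborSet) (hp : p.Prime)
    (hσ : σ ∈ Γ.autGroup) (hc : σ.IsCycle) (hσp : #σ.support = p) {x₀ : V}
    (hx₀ : x₀ ∈ σ.support) : HasLexFactor Γ (Γ.comap (cycleCoord σ x₀ (n := p))) := by
  have hn : orderOf σ = p := hc.orderOf.trans hσp
  have hiff {τ : Perm V} (hτ : τ ∈ Γ.autGroup) (hcτ : τ.IsCycle) (hτp : #τ.support = p) {u v} :=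
    sameAutCycle_iff_mem_support (u := u) (v := v) hN hN' hp hτ hcτ hτp
  let s : Setoid V :=
    { r := SameAutCycle Γ p
      iseqv :=
        { refl u := by
            obtain ⟨g, rfl⟩ := hvt x₀ u
            exact SameAutCycle.map g ⟨σ, hσ, hc, hσp, hx₀, hx₀⟩
          symm := fun ⟨τ, hτ, hcτ, hτp, hu, hv⟩ => ⟨τ, hτ, hcτ, hτp, hv, hu⟩
          trans := fun ⟨τ, hτ, hcτ, hτp, hu, hv⟩ hvw =>
            (hiff hτ hcτ hτp hu).mpr ((hiff hτ hcτ hτp hv).mp hvw) } }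
  refine hasLexFactor_of_setoid (s := s) hvt (fun g u v => SameAutCycle.map g) ?_ fun v => ?_
  · rintro u u' v ⟨τ, hτ, hcτ, hτp, hu, hu'⟩ huv hadj
    have hv : v ∉ τ.support := fun hv => huv ⟨τ, hτ, hcτ, hτp, hu, hv⟩
    rwa [Γ.adj_comm, adj_iff_of_mem_support hτ hcτ hv hu' hu, Γ.adj_comm]
  · obtain ⟨g, rfl⟩ := hvt x₀ v
    obtain ⟨τ, hτ, hcτ, hsupp⟩ := exists_isCycle_support_eq_map g hσ hc
    have hτp : #τ.support = p := by rw [hsupp, card_map, hσp]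
    have hgx₀ : g x₀ ∈ τ.support := hsupp ▸ mem_map_of_mem _ hx₀
    refine ⟨g.toEmbedding.comp (Embedding.comap ⟨_, cycleCoord_injective hc hn hx₀⟩ Γ), ?_⟩
    ext w
    change w ∈ Set.range (g ∘ cycleCoord σ x₀) ↔ SameAutCycle Γ p (g x₀) w
    rw [hiff hτ hcτ hτp hgx₀, Set.range_comp, range_cycleCoord hc hn hx₀, hsupp, mem_map]
    rfl

end SimpleGraph

open SimpleGraph

theorem statement_14_general {V : Type} [Fintype V] [DecidableEq V] (Γ : SimpleGraph V)
    (hvt : IsVertexTransitive Γ) (p : ℕ) (hp : p.Prime) (hp5 : 5 ≤ p) :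
    motion Γ ≠ p ∧
    ((∃ e : Γ ≃g Γ, Equiv.Perm.IsCycle (e.toEquiv : Equiv.Perm V) ∧
        (Equiv.Perm.support (e.toEquiv : Equiv.Perm V)).card = p) →
      ∃ (k : ℕ) (Θ : SimpleGraph (Fin k)), IsVertexTransitive Θ ∧
        ((∃ m : ℕ, 2 ≤ m ∧
            (Nonempty (Γ ≃g lexProd Θ (⊤ : SimpleGraph (Fin m))) ∨
             Nonempty (Γ ≃g lexProd Θ (⊥ : SimpleGraph (Fin m))))) ∨
         (∃ Sp : SimpleGraph (ZMod p), IsCirculant Sp ∧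
            Nonempty (Γ ≃g lexProd Θ Sp)))) := by
  refine ⟨motion_ne_of_prime hp (by omega), fun ⟨e, hc, hcard⟩ => ?_⟩
  by_cases hN : Injective Γ.neighborSet
  · by_cases hN' : Injective Γ.closedNeighborSet
    · obtain ⟨x₀, hx₀, -⟩ := id hc
      have hσ := Iso.toEquiv_mem_autGroup e
      obtain ⟨k, Θ, hΘ, hiso⟩ := hasLexFactor_comap_cycleCoord hvt hN hN' hp hσ hc hcard
        (Equiv.Perm.mem_support.mpr hx₀)
      exact ⟨k, Θ, hΘ, Or.inr ⟨_, isCirculant_comap_cycleCoord hσ (hc.orderOf.trans hcard) x₀,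
        hiso⟩⟩
    · obtain ⟨m, hm, k, Θ, hΘ, hiso⟩ := exists_hasLexFactor_top_of_not_injective hvt hN'
      exact ⟨k, Θ, hΘ, Or.inl ⟨m, hm, Or.inl hiso⟩⟩
  · obtain ⟨m, hm, k, Θ, hΘ, hiso⟩ := exists_hasLexFactor_bot_of_not_injective hvt hN
    exact ⟨k, Θ, hΘ, Or.inl ⟨m, hm, Or.inr hiso⟩⟩

/-- No finite vertex-transitive graph has motion `p` for a prime
`p ≥ 5`; more precisely, if the automorphism group of a finite vertex-transitive
graph `Γ` contains a `p`-cycle for a prime `p ≥ 5`, then `Γ ≅ Θ[Δ]` with `Θ`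
vertex-transitive and `Δ` either `K_m` or `m K₁` for some `m ≥ 2`, or a circulant
graph on `p` vertices. -/
theorem statement_14 {V : Type} [Fintype V] [DecidableEq V] (Γ : SimpleGraph V)
    (hvt : IsVertexTransitive Γ) (p : ℕ) [NeZero p] (hp : p.Prime) (hp5 : 5 ≤ p) :
    motion Γ ≠ p ∧
    ((∃ e : Γ ≃g Γ, Equiv.Perm.IsCycle (e.toEquiv : Equiv.Perm V) ∧
        (Equiv.Perm.support (e.toEquiv : Equiv.Perm V)).card = p) →
      ∃ (k : ℕ) (Θ : SimpleGraph (Fin k)), IsVertexTransitive Θ ∧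
        ((∃ m : ℕ, 2 ≤ m ∧
            (Nonempty (Γ ≃g lexProd Θ (⊤ : SimpleGraph (Fin m))) ∨
             Nonempty (Γ ≃g lexProd Θ (⊥ : SimpleGraph (Fin m))))) ∨
         (∃ Sp : SimpleGraph (ZMod p), IsCirculant Sp ∧
            Nonempty (Γ ≃g lexProd Θ Sp)))) :=
  statement_14_general Γ hvt p hp hp5
end
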